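/- arXiv:1004.5269 — 4 statements merged into one kernel-verified Lean document; each statement's English description precedes it below -/
import Mathlib

section
/- Let H be a real inner product space, let u_1, …, u_d ∈ H be orthonormal and let v_1, …, v_d ∈ H satisfy Σ_{i=1}^d ‖v_i‖² ≤ 1/4. Define the d×d Gram matrix A by A_{ij} = ⟨u_i + v_i, u_j + v_j⟩. Then ⟨Aξ, ξ⟩ ≥ (1/4)|ξ|² for every ξ ∈ ℝ^d; in particular A is symmetric positive definite and det A ≥ 4^{−d}. -/
/-!
The quadratic form of the Gram matrix of `w i = u i + v i` is `‖∑ ξ i • w i‖²`. By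
orthonormality `‖∑ ξ i • u i‖ = |ξ|`, and by Cauchy–Schwarz `‖∑ ξ i • v i‖ ≤ |ξ| / 2`, so the
form is at least `|ξ|² / 4`. Hence every eigenvalue of `A` is at least `1 / 4`, which gives
positive definiteness and `det A ≥ 4⁻ᵈ`.
-/

open Finset Matrix

section GramPerturbation

variable {ι H : Type*} [Fintype ι] [NormedAddCommGroup H] [InnerProductSpace ℝ H]

theorem norm_sum_smul_le_sqrt_mul_sqrt (ξ : ι → ℝ) (v : ι → H) :
    ‖∑ i, ξ i • v i‖ ≤ √(∑ i, ξ i ^ 2) * √(∑ i, ‖v i‖ ^ 2) :=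
  calc ‖∑ i, ξ i • v i‖ ≤ ∑ i, |ξ i| * ‖v i‖ := by
        simpa only [norm_smul, Real.norm_eq_abs] using norm_sum_le univ fun i ↦ ξ i • v i
    _ ≤ √(∑ i, |ξ i| ^ 2) * √(∑ i, ‖v i‖ ^ 2) := Real.sum_mul_le_sqrt_mul_sqrt _ _ _
    _ = √(∑ i, ξ i ^ 2) * √(∑ i, ‖v i‖ ^ 2) := by simp only [sq_abs]

theorem Orthonormal.norm_sum_smul {u : ι → H} (hu : Orthonormal ℝ u) (ξ : ι → ℝ) :
    ‖∑ i, ξ i • u i‖ = √(∑ i, ξ i ^ 2) := by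
  rw [← Real.sqrt_sq (norm_nonneg _), ← real_inner_self_eq_norm_sq, hu.inner_sum]
  simp only [conj_trivial, sq]

theorem Orthonormal.sqrt_mul_le_norm_sum_smul_add {u : ι → H} (hu : Orthonormal ℝ u)
    (v : ι → H) (ξ : ι → ℝ) :
    (1 - √(∑ i, ‖v i‖ ^ 2)) * √(∑ i, ξ i ^ 2) ≤ ‖∑ i, ξ i • (u i + v i)‖ := by
  have hsplit : ∑ i, ξ i • (u i + v i) = ∑ i, ξ i • u i + ∑ i, ξ i • v i := by
    simp only [smul_add, sum_add_distrib]
  have hreverse := norm_sub_norm_le (∑ i, ξ i • u i) (-∑ i, ξ i • v i)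
  rw [sub_neg_eq_add, ← hsplit, norm_neg, hu.norm_sum_smul] at hreverse
  nlinarith [norm_sum_smul_le_sqrt_mul_sqrt ξ v]

theorem Matrix.dotProduct_gram_mulVec (w : ι → H) (ξ : ι → ℝ) :
    ξ ⬝ᵥ gram ℝ w *ᵥ ξ = ‖∑ i, ξ i • w i‖ ^ 2 := by
  simpa using star_dotProduct_gram_mulVec (𝕜 := ℝ) w ξ ξ

theorem Orthonormal.sq_mul_le_dotProduct_gram_add {u : ι → H} (hu : Orthonormal ℝ u)
    {v : ι → H} (hv : ∑ i, ‖v i‖ ^ 2 ≤ 1) (ξ : ι → ℝ) :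
    (1 - √(∑ i, ‖v i‖ ^ 2)) ^ 2 * (ξ ⬝ᵥ ξ) ≤ ξ ⬝ᵥ gram ℝ (u + v) *ᵥ ξ := by
  have hV : 0 ≤ 1 - √(∑ i, ‖v i‖ ^ 2) := sub_nonneg.2 (Real.sqrt_le_one.2 hv)
  have hξ : ξ ⬝ᵥ ξ = √(∑ i, ξ i ^ 2) ^ 2 := by
    rw [Real.sq_sqrt (by positivity)]
    simp only [dotProduct, sq]
  rw [dotProduct_gram_mulVec, hξ, ← mul_pow]
  exact pow_le_pow_left₀ (by positivity) (hu.sqrt_mul_le_norm_sum_smul_add v ξ) 2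

end GramPerturbation

theorem Matrix.dotProduct_mulVec_eq_sum_sum {n R : Type*} [Fintype n] [CommSemiring R]
    (A : Matrix n n R) (x : n → R) : x ⬝ᵥ A *ᵥ x = ∑ i, ∑ j, A i j * x i * x j := by
  simp only [dotProduct, mulVec, mul_sum]
  exact sum_congr rfl fun _ _ ↦ sum_congr rfl fun _ _ ↦ by ring

namespace Matrix.IsHermitian

variable {n : Type*} [Fintype n] [DecidableEq n] {A : Matrix n n ℝ} (hA : A.IsHermitian) {c : ℝ}
include hA

theorem le_eigenvalues_of_forall_le_dotProduct (h : ∀ x, c * (x ⬝ᵥ x) ≤ x ⬝ᵥ A *ᵥ x) (i : n) :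
    c ≤ hA.eigenvalues i := by
  -- the inner product of `EuclideanSpace ℝ n` is definitionally the dot product
  have hunit : ⇑(hA.eigenvectorBasis i) ⬝ᵥ ⇑(hA.eigenvectorBasis i) = 1 :=
    hA.eigenvectorBasis.inner_eq_one i
  simpa [hA.eigenvalues_eq i, hunit] using h (hA.eigenvectorBasis i)

theorem posDef_of_forall_le_dotProduct (hc : 0 < c) (h : ∀ x, c * (x ⬝ᵥ x) ≤ x ⬝ᵥ A *ᵥ x) :
    A.PosDef :=
  hA.posDef_iff_eigenvalues_pos.2 fun i ↦
    hc.trans_le (hA.le_eigenvalues_of_forall_le_dotProduct h i)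

theorem pow_card_le_det_of_forall_le_dotProduct (hc : 0 ≤ c)
    (h : ∀ x, c * (x ⬝ᵥ x) ≤ x ⬝ᵥ A *ᵥ x) : c ^ Fintype.card n ≤ A.det := by
  rw [hA.det_eq_prod_eigenvalues, ← card_univ, ← prod_const]
  exact prod_le_prod (fun _ _ ↦ hc) fun i _ ↦ hA.le_eigenvalues_of_forall_le_dotProduct h i

end Matrix.IsHermitian

/-- If `u_1, …, u_d` are orthonormal in a real inner product space `H` and
`v_1, …, v_d` satisfy `Σ ‖v_i‖² ≤ 1/4`, then the Gram matrix `A_{ij} = ⟨u_i + v_i, u_j + v_j⟩`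
satisfies `⟨Aξ, ξ⟩ ≥ (1/4)|ξ|²` for every `ξ ∈ ℝ^d`; in particular `A` is symmetric positive
definite and `det A ≥ 4^{−d}`. -/
theorem stmt_5 (d : ℕ)
    (H : Type*) [NormedAddCommGroup H] [InnerProductSpace ℝ H]
    (u v : Fin d → H) (hu : Orthonormal ℝ u)
    (hv : ∑ i, ‖v i‖ ^ 2 ≤ 1 / 4)
    (A : Matrix (Fin d) (Fin d) ℝ)
    (hA : ∀ i j, A i j = (inner ℝ (u i + v i) (u j + v j) : ℝ)) :
    (∀ ξ : Fin d → ℝ, (1 / 4) * ∑ i, ξ i ^ 2 ≤ ∑ i, ∑ j, A i j * ξ i * ξ j) ∧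
    A.IsSymm ∧ A.PosDef ∧ ((4 : ℝ) ^ d)⁻¹ ≤ A.det := by
  have hgram : A = gram ℝ (u + v) := Matrix.ext hA
  have hc : 1 / 4 ≤ (1 - √(∑ i, ‖v i‖ ^ 2)) ^ 2 := by
    have : √(∑ i, ‖v i‖ ^ 2) ≤ 1 / 2 := Real.sqrt_le_iff.2 ⟨by norm_num, by linarith⟩
    nlinarith
  have key (ξ : Fin d → ℝ) : 1 / 4 * (ξ ⬝ᵥ ξ) ≤ ξ ⬝ᵥ A *ᵥ ξ :=
    hgram ▸ (mul_le_mul_of_nonneg_right hc (dotProduct_self_star_nonneg ξ)).trans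
      (hu.sq_mul_le_dotProduct_gram_add (by linarith) ξ)
  have hherm : A.IsHermitian := hgram ▸ isHermitian_gram ℝ (u + v)
  refine ⟨fun ξ ↦ ?_, isHermitian_iff_isSymm.1 hherm,
    hherm.posDef_of_forall_le_dotProduct (by norm_num) key, ?_⟩
  · rw [← dotProduct_mulVec_eq_sum_sum]
    simpa only [dotProduct, sq] using key ξ
  · simpa using hherm.pow_card_le_det_of_forall_le_dotProduct (by norm_num) key
end

section
/- For every d ≥ 1 there exists a constant C_d > 0 depending only on d with the following property. Let H be a real inner product space, let u_1, …, u_d ∈ H be orthonormal, let v_1, …, v_d ∈ H and set ρ = (Σ_{i=1}^d ‖v_i‖²)^{1/2}. Define the d×d Gram matrix A by A_{ij} = ⟨u_i + v_i, u_j + v_j⟩ and assume det A ≥ 4^{−d}. Then A is invertible and max_{1≤i,j≤d} |(A^{−1})_{ij} − δ_{ij}| ≤ C_d (1 + ρ)^{2d−1} ρ, where δ_{ij} is the Kronecker delta. -/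
/-!
Write `A = I + E`. Since `‖u_i‖ = 1` and `‖v_i‖ ≤ ρ`, every entry of `A` is at most `(1 + ρ)²` and
every entry of `E` is at most `2 (1 + ρ) ρ` in absolute value. Each cofactor of `A` is a
`(d-1) × (d-1)` determinant, hence bounded by `(d-1)! (1 + ρ)^(2d-2)`, so with `det A ≥ 4^(-d)` the
entries of `A⁻¹` are `O((1 + ρ)^(2d-2))`. Finally `A⁻¹ - I = A⁻¹ (I - A)` gives the bound.
-/

open Matrix Finset Nat RealInnerProductSpace

lemma norm_le_sqrt_sum_sq_norm {ι E : Type*} [Fintype ι] [SeminormedAddCommGroup E]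
    (v : ι → E) (k : ι) : ‖v k‖ ≤ √(∑ i, ‖v i‖ ^ 2) :=
  Real.le_sqrt_of_sq_le <|
    single_le_sum (f := fun i => ‖v i‖ ^ 2) (fun _ _ => sq_nonneg _) (mem_univ k)

section Perturbation

variable {H : Type*} [NormedAddCommGroup H] [InnerProductSpace ℝ H] {x x' y y' : H} {r : ℝ}

lemma abs_inner_add_add_le (hx : ‖x‖ ≤ 1) (hx' : ‖x'‖ ≤ 1) (hy : ‖y‖ ≤ r) (hy' : ‖y'‖ ≤ r) :
    |⟪x + y, x' + y'⟫| ≤ (1 + r) ^ 2 := by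
  have hxy : ‖x + y‖ ≤ 1 + r := (norm_add_le x y).trans (add_le_add hx hy)
  have hxy' : ‖x' + y'‖ ≤ 1 + r := (norm_add_le x' y').trans (add_le_add hx' hy')
  calc |⟪x + y, x' + y'⟫| ≤ ‖x + y‖ * ‖x' + y'‖ := abs_real_inner_le_norm _ _
    _ ≤ (1 + r) * (1 + r) := mul_le_mul hxy hxy' (norm_nonneg _) ((norm_nonneg _).trans hxy)
    _ = (1 + r) ^ 2 := (sq _).symm

lemma abs_inner_add_add_sub_inner_le (hx : ‖x‖ ≤ 1) (hx' : ‖x'‖ ≤ 1) (hy : ‖y‖ ≤ r)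
    (hy' : ‖y'‖ ≤ r) : |⟪x + y, x' + y'⟫ - ⟪x, x'⟫| ≤ 2 * (1 + r) * r := by
  have hr : 0 ≤ r := (norm_nonneg _).trans hy
  have h₁ : |⟪x, y'⟫| ≤ r :=
    (abs_real_inner_le_norm _ _).trans <| by nlinarith [norm_nonneg x, norm_nonneg y']
  have h₂ : |⟪y, x'⟫| ≤ r :=
    (abs_real_inner_le_norm _ _).trans <| by nlinarith [norm_nonneg y, norm_nonneg x']
  have h₃ : |⟪y, y'⟫| ≤ r * r :=
    (abs_real_inner_le_norm _ _).trans (mul_le_mul hy hy' (norm_nonneg _) hr)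
  have hexp : ⟪x + y, x' + y'⟫ - ⟪x, x'⟫ = ⟪x, y'⟫ + ⟪y, x'⟫ + ⟪y, y'⟫ := by
    simp only [inner_add_left, inner_add_right]; ring
  rw [hexp]
  calc |⟪x, y'⟫ + ⟪y, x'⟫ + ⟪y, y'⟫| ≤ |⟪x, y'⟫| + |⟪y, x'⟫| + |⟪y, y'⟫| :=
        abs_add_three _ _ _
    _ ≤ 2 * (1 + r) * r := by nlinarith

end Perturbation

namespace Matrix

variable {K : Type*} [Field K] [LinearOrder K] [IsStrictOrderedRing K]

lemma abs_adjugate_apply_le {n : ℕ} {A : Matrix (Fin (n + 1)) (Fin (n + 1)) K} {c : K}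
    (hA : ∀ i j, |A i j| ≤ c) (i j : Fin (n + 1)) : |A.adjugate i j| ≤ n ! * c ^ n := by
  have hminor := det_le (abv := AbsoluteValue.abs) (A := A.submatrix j.succAbove i.succAbove)
    fun k l => hA _ _
  rw [Fintype.card_fin, nsmul_eq_mul] at hminor
  rw [adjugate_fin_succ_eq_det_submatrix, abs_mul, abs_pow, abs_neg, abs_one, one_pow, one_mul]
  exact hminor

lemma abs_inv_apply {m : Type*} [Fintype m] [DecidableEq m] (A : Matrix m m K) (i j : m) :
    |A⁻¹ i j| = |A.det|⁻¹ * |A.adjugate i j| := by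
  rw [inv_def, smul_apply, Ring.inverse_eq_inv, smul_eq_mul, abs_mul, abs_inv]

lemma abs_mul_apply_le {l m o : Type*} [Fintype m] {P : Matrix l m K} {Q : Matrix m o K}
    {a b : K} (hP : ∀ i k, |P i k| ≤ a) (hQ : ∀ k j, |Q k j| ≤ b) (i : l) (j : o) :
    |(P * Q) i j| ≤ Fintype.card m * (a * b) := by
  rw [mul_apply]
  calc |∑ k, P i k * Q k j| ≤ ∑ k, |P i k * Q k j| := abs_sum_le_sum_abs _ _
    _ ≤ ∑ _k : m, a * b := sum_le_sum fun k _ => by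
        rw [abs_mul]
        exact mul_le_mul (hP i k) (hQ k j) (abs_nonneg _) ((abs_nonneg _).trans (hP i k))
    _ = Fintype.card m * (a * b) := by rw [sum_const, Finset.card_univ, nsmul_eq_mul]

end Matrix

/-- For every `d ≥ 1` there is a constant `C_d > 0` such that: if
`u_1, …, u_d` are orthonormal in a real inner product space `H`, `v_1, …, v_d ∈ H`,
`ρ = (Σ ‖v_i‖²)^{1/2}`, and the Gram matrix `A_{ij} = ⟨u_i + v_i, u_j + v_j⟩` has
`det A ≥ 4^{−d}`, then `A` is invertible and
`max_{i,j} |(A⁻¹)_{ij} − δ_{ij}| ≤ C_d (1 + ρ)^{2d−1} ρ`. -/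
theorem stmt_6 (d : ℕ) (hd : 1 ≤ d) :
    ∃ C : ℝ, 0 < C ∧
      ∀ (H : Type) [NormedAddCommGroup H] [InnerProductSpace ℝ H]
        (u v : Fin d → H), Orthonormal ℝ u →
      ∀ (A : Matrix (Fin d) (Fin d) ℝ),
        (∀ i j, A i j = (inner ℝ (u i + v i) (u j + v j) : ℝ)) →
        ((4 : ℝ) ^ d)⁻¹ ≤ A.det →
        IsUnit A.det ∧
        ∀ i j, |A⁻¹ i j - (if i = j then (1 : ℝ) else 0)|
          ≤ C * (1 + Real.sqrt (∑ k, ‖v k‖ ^ 2)) ^ (2 * d - 1)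
              * Real.sqrt (∑ k, ‖v k‖ ^ 2) := by
  obtain ⟨n, rfl⟩ : ∃ n, d = n + 1 := ⟨d - 1, by omega⟩
  refine ⟨(n + 1) * (4 ^ (n + 1) * n ! * 2), by positivity, ?_⟩
  intro H _ _ u v hu A hA hdet
  set ρ := √(∑ k, ‖v k‖ ^ 2)
  have hu₁ (i : Fin (n + 1)) : ‖u i‖ ≤ 1 := (hu.1 i).le
  have hv (i : Fin (n + 1)) : ‖v i‖ ≤ ρ := norm_le_sqrt_sum_sq_norm v i
  have hdet_pos : 0 < A.det := (by positivity : (0 : ℝ) < (4 ^ (n + 1))⁻¹).trans_le hdet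
  refine ⟨hdet_pos.ne'.isUnit, fun i j => ?_⟩
  have hinv (i k : Fin (n + 1)) : |A⁻¹ i k| ≤ 4 ^ (n + 1) * (n ! * ((1 + ρ) ^ 2) ^ n) := by
    rw [abs_inv_apply, abs_of_pos hdet_pos]
    refine mul_le_mul (inv_le_of_inv_le₀ (by positivity) hdet)
      (abs_adjugate_apply_le (fun k l => ?_) i k) (abs_nonneg _) (by positivity)
    rw [hA]
    exact abs_inner_add_add_le (hu₁ k) (hu₁ l) (hv k) (hv l)
  have hpert (k j : Fin (n + 1)) : |(1 - A) k j| ≤ 2 * (1 + ρ) * ρ := by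
    rw [Matrix.sub_apply, abs_sub_comm, hA, one_apply, ← orthonormal_iff_ite.mp hu]
    exact abs_inner_add_add_sub_inner_le (hu₁ k) (hu₁ j) (hv k) (hv j)
  have hsplit : A⁻¹ - 1 = A⁻¹ * (1 - A) := by
    rw [mul_sub, mul_one, nonsing_inv_mul A hdet_pos.ne'.isUnit]
  calc |A⁻¹ i j - (if i = j then 1 else 0)| = |(A⁻¹ * (1 - A)) i j| := by
        rw [← hsplit, Matrix.sub_apply, one_apply]
    _ ≤ Fintype.card (Fin (n + 1)) * (4 ^ (n + 1) * (n ! * ((1 + ρ) ^ 2) ^ n)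
          * (2 * (1 + ρ) * ρ)) := abs_mul_apply_le hinv hpert i j
    _ = (n + 1) * (4 ^ (n + 1) * n ! * 2) * (1 + ρ) ^ (2 * (n + 1) - 1) * ρ := by
        rw [Fintype.card_fin, show 2 * (n + 1) - 1 = 2 * n + 1 by omega, ← pow_mul]
        push_cast
        ring
end

section
/- Let a > 0 and p ≥ 1. For every x ∈ [a, 2a) one has (a/(2a − x)²)^p · ψ_a(x) ≤ e · a^{−p} · sup_{y ≥ 0} y^{2p} e^{−y} = e · a^{−p} · (2p/e)^{2p}. Consequently, at every point x ≠ a where ψ_a is differentiable and ψ_a(x) > 0, one has |ψ_a'(x)/ψ_a(x)|^p ψ_a(x) ≤ e · a^{−p} · (2p/e)^{2p}. -/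
/-!
On `[a, 2a)` write `y = a / (2a − x)`. Then `ψ_a(x) = e · e^{-y}` and `a/(2a − x)² = y²/a`, so
the left-hand side equals `e · a^{-p} · y^{2p} e^{-y}`, and `y^{2p} e^{-y}` is maximal at `y = 2p`.
Off `[a, 2a]` the function `ψ_a` is either locally constant or vanishes, and on `(a, 2a)` the
logarithmic derivative `ψ_a'/ψ_a` is `−a/(2a − x)²`, so the second bound is the first one.
-/

open Classical

/-- The localization function `ψ_a`: `ψ_a(x) = 1` for `x < a`,
`ψ_a(x) = exp(1 − a/(2a − x))` for `a ≤ x < 2a`, and `ψ_a(x) = 0` for `x ≥ 2a`. -/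
noncomputable def psiLoc (a : ℝ) (x : ℝ) : ℝ :=
  if x < a then 1 else if x < 2 * a then Real.exp (1 - a / (2 * a - x)) else 0

open Real Set

section RpowMulExpNeg

variable {c : ℝ}

/-- Rescaling `y ↦ y / c` reduces the bound to `y e^{-y} ≤ e^{-1}`. -/
theorem rpow_mul_exp_neg_le (hc : 0 < c) {y : ℝ} (hy : 0 ≤ y) :
    y ^ c * exp (-y) ≤ (c / exp 1) ^ c := by
  have hscale : y ^ c * exp (-y) = (c * (y / c * exp (-(y / c)))) ^ c := by
    rw [← mul_assoc, mul_div_cancel₀ y hc.ne', mul_rpow hy (exp_pos _).le, ← exp_mul,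
      neg_mul, div_mul_cancel₀ y hc.ne']
  rw [hscale, div_eq_mul_inv c, ← exp_neg]
  gcongr
  exact mul_exp_neg_le_exp_neg_one _

theorem rpow_self_mul_exp_neg (hc : 0 < c) : c ^ c * exp (-c) = (c / exp 1) ^ c := by
  rw [div_rpow hc.le (exp_pos 1).le, exp_one_rpow, exp_neg, div_eq_mul_inv]

theorem bddAbove_range_rpow_mul_exp_neg (hc : 0 < c) :
    BddAbove (range fun y : {y : ℝ // 0 ≤ y} => (y : ℝ) ^ c * exp (-(y : ℝ))) := by
  refine ⟨(c / exp 1) ^ c, ?_⟩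
  rintro _ ⟨y, rfl⟩
  exact rpow_mul_exp_neg_le hc y.2

theorem iSup_rpow_mul_exp_neg (hc : 0 < c) :
    ⨆ y : {y : ℝ // 0 ≤ y}, (y : ℝ) ^ c * exp (-(y : ℝ)) = (c / exp 1) ^ c :=
  le_antisymm (ciSup_le fun y => rpow_mul_exp_neg_le hc y.2)
    (rpow_self_mul_exp_neg hc ▸ le_ciSup (bddAbove_range_rpow_mul_exp_neg hc) ⟨c, hc.le⟩)

end RpowMulExpNeg

section PsiLoc

variable {a x : ℝ}

theorem psiLoc_of_lt (hx : x < a) : psiLoc a x = 1 := if_pos hx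

theorem psiLoc_of_mem_Ico (hx : x ∈ Ico a (2 * a)) :
    psiLoc a x = exp (1 - a / (2 * a - x)) := by
  rw [psiLoc, if_neg (not_lt.2 hx.1), if_pos hx.2]

theorem psiLoc_eq_zero_of_two_mul_le (ha : 0 < a) (hx : 2 * a ≤ x) : psiLoc a x = 0 := by
  rw [psiLoc, if_neg (by linarith), if_neg (not_lt.2 hx)]

theorem lt_two_mul_of_psiLoc_pos (ha : 0 < a) (hpos : 0 < psiLoc a x) : x < 2 * a := by
  by_contra! hx
  exact hpos.ne' (psiLoc_eq_zero_of_two_mul_le ha hx)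

theorem deriv_psiLoc_of_lt (hx : x < a) : deriv (psiLoc a) x = 0 := by
  have hconst : psiLoc a =ᶠ[nhds x] fun _ => 1 := by
    filter_upwards [Iio_mem_nhds hx] with z hz using psiLoc_of_lt hz
  rw [hconst.deriv_eq, deriv_const]

theorem hasDerivAt_psiLoc_of_mem_Ioo (hx : x ∈ Ioo a (2 * a)) :
    HasDerivAt (psiLoc a) (-(a / (2 * a - x) ^ 2) * psiLoc a x) x := by
  have hden : 2 * a - x ≠ 0 := by linarith [hx.2]
  have hexp : psiLoc a =ᶠ[nhds x] fun z => exp (1 - a / (2 * a - z)) := by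
    filter_upwards [Ioo_mem_nhds hx.1 hx.2] with z hz
    exact psiLoc_of_mem_Ico (Ioo_subset_Ico_self hz)
  have hinv : HasDerivAt (fun z => a / (2 * a - z)) (a / (2 * a - x) ^ 2) x := by
    simpa using (hasDerivAt_const x a).fun_div ((hasDerivAt_id' x).const_sub (2 * a)) hden
  rw [psiLoc_of_mem_Ico (Ioo_subset_Ico_self hx), mul_comm]
  exact ((hinv.const_sub 1).exp).congr_of_eventuallyEq hexp

theorem deriv_psiLoc_div_psiLoc_of_mem_Ioo (hx : x ∈ Ioo a (2 * a)) :
    deriv (psiLoc a) x / psiLoc a x = -(a / (2 * a - x) ^ 2) := by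
  rw [(hasDerivAt_psiLoc_of_mem_Ioo hx).deriv, mul_div_assoc,
    div_self (psiLoc_of_mem_Ico (Ioo_subset_Ico_self hx) ▸ exp_ne_zero _), mul_one]

theorem rpow_mul_psiLoc_eq (ha : 0 < a) (p : ℝ) (hx : x ∈ Ico a (2 * a)) :
    (a / (2 * a - x) ^ 2) ^ p * psiLoc a x
      = exp 1 * a ^ (-p) * ((a / (2 * a - x)) ^ (2 * p) * exp (-(a / (2 * a - x)))) := by
  have hden : 0 < 2 * a - x := by linarith [hx.2]
  set y := a / (2 * a - x) with hy
  have hy0 : 0 < y := by positivity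
  have hbase : a / (2 * a - x) ^ 2 = y ^ (2 : ℝ) * a ^ (-1 : ℝ) := by
    rw [hy, rpow_two, rpow_neg_one]
    field_simp
  rw [psiLoc_of_mem_Ico hx, ← hy, hbase, mul_rpow (by positivity) (by positivity),
    ← rpow_mul hy0.le, ← rpow_mul ha.le, sub_eq_add_neg, exp_add]
  ring_nf

theorem rpow_div_sq_mul_psiLoc_le (ha : 0 < a) {p : ℝ} (hp : 0 < p) (hx : x ∈ Ico a (2 * a)) :
    (a / (2 * a - x) ^ 2) ^ p * psiLoc a x
      ≤ exp 1 * a ^ (-p) * ⨆ y : {y : ℝ // 0 ≤ y}, (y : ℝ) ^ (2 * p) * exp (-(y : ℝ)) := by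
  have hy : 0 ≤ a / (2 * a - x) := div_nonneg ha.le (by linarith [hx.2])
  rw [rpow_mul_psiLoc_eq ha p hx]
  gcongr
  exact le_ciSup (bddAbove_range_rpow_mul_exp_neg (by positivity)) ⟨_, hy⟩

end PsiLoc

/-- For `a > 0` and `p ≥ 1`, for every `x ∈ [a, 2a)` one has
`(a/(2a − x)²)^p ψ_a(x) ≤ e a^{−p} sup_{y ≥ 0} y^{2p} e^{−y} = e a^{−p} (2p/e)^{2p}`.
Consequently, at every `x ≠ a` where `ψ_a` is differentiable and `ψ_a(x) > 0`,
`|ψ_a'(x)/ψ_a(x)|^p ψ_a(x) ≤ e a^{−p} (2p/e)^{2p}`. -/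
theorem stmt_8 (a p : ℝ) (ha : 0 < a) (hp : 1 ≤ p) :
    (∀ x ∈ Set.Ico a (2 * a),
      (a / (2 * a - x) ^ 2) ^ p * psiLoc a x
        ≤ Real.exp 1 * a ^ (-p)
            * (⨆ y : {y : ℝ // 0 ≤ y}, (y : ℝ) ^ (2 * p) * Real.exp (-(y : ℝ)))) ∧
    (⨆ y : {y : ℝ // 0 ≤ y}, (y : ℝ) ^ (2 * p) * Real.exp (-(y : ℝ)))
        = (2 * p / Real.exp 1) ^ (2 * p) ∧
    (∀ x : ℝ, x ≠ a → DifferentiableAt ℝ (psiLoc a) x → 0 < psiLoc a x →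
      |deriv (psiLoc a) x / psiLoc a x| ^ p * psiLoc a x
        ≤ Real.exp 1 * a ^ (-p) * (2 * p / Real.exp 1) ^ (2 * p)) := by
  have hp0 : 0 < p := by linarith
  have h2p : 0 < 2 * p := by linarith
  refine ⟨fun _ => rpow_div_sq_mul_psiLoc_le ha hp0, iSup_rpow_mul_exp_neg h2p,
    fun x hxa _ hpos => ?_⟩
  rcases hxa.lt_or_gt with hlt | hgt
  · rw [deriv_psiLoc_of_lt hlt, zero_div, abs_zero, zero_rpow (by positivity), zero_mul]
    positivity
  · have hx : x ∈ Ioo a (2 * a) := ⟨hgt, lt_two_mul_of_psiLoc_pos ha hpos⟩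
    rw [deriv_psiLoc_div_psiLoc_of_mem_Ioo hx, abs_neg, abs_of_nonneg (by positivity),
      ← iSup_rpow_mul_exp_neg h2p]
    exact rpow_div_sq_mul_psiLoc_le ha hp0 (Ioo_subset_Ico_self hx)
end

section
/- Let T > 0, d, n, m ≥ 1 and let σ : ℝ^d × ℝ^n → ℝ^{d×m}, b̄ : ℝ^d × ℝ^n → ℝ^d, α : ℝ^d × ℝ^n → ℝ^{n×m}, β̄ : ℝ^d × ℝ^n → ℝ^n be bounded Lipschitz functions. Let x ∈ C¹([0,T]; ℝ^d), y₀ ∈ ℝ^n, and assume there is λ_* > 0 such that ⟨σσ*(x_t, y)ξ, ξ⟩ ≥ λ_* |ξ|² for all t ∈ [0,T], y ∈ ℝ^n and ξ ∈ ℝ^d. Then there exist y ∈ C¹([0,T]; ℝ^n) with y(0) = y₀ and a continuous (hence square-integrable) control φ : [0,T] → ℝ^m such that for every t ∈ [0,T]: x'(t) = σ(x_t, y_t)φ_t + b̄(x_t, y_t) and y'(t) = α(x_t, y_t)φ_t + β̄(x_t, y_t). -/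
/-!
Uniform ellipticity makes `σσ*(x_t, y)` invertible with `‖(σσ*)⁻¹‖ ≤ 1/λ_*`, so the control
`φ = σ*(σσ*)⁻¹(x' - b̄)` solves the `x`-equation for every choice of `y`. Substituting it into the
`y`-equation leaves the ODE `y' = α φ + β̄`. Its right-hand side, viewed as a function of
`(x_t, y, x'_t)`, is bounded and Lipschitz wherever ellipticity holds and `x'` is bounded: products
of bounded Lipschitz maps are bounded Lipschitz, and `A⁻¹ - B⁻¹ = A⁻¹ (B - A) B⁻¹` makes inversion
Lipschitz on uniformly coercive operators. Picard–Lindelöf then gives `y`, and continuity of `x'`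
makes `φ` and `y'` continuous.
-/

open Set Function
open ContinuousLinearMap (adjoint)
open scoped NNReal InnerProductSpace

section

variable {Z E F G : Type*} [PseudoMetricSpace Z]
  [SeminormedAddCommGroup E] [SeminormedAddCommGroup F] [SeminormedAddCommGroup G]

def BoundedLipschitzOn (f : Z → E) (s : Set Z) : Prop :=
  (∃ K, LipschitzOnWith K f s) ∧ ∃ M : ℝ≥0, ∀ z ∈ s, ‖f z‖ ≤ M

namespace BoundedLipschitzOn

variable {f g : Z → E} {s : Set Z}

theorem of_lipschitzWith (h : (∃ K, LipschitzWith K f) ∧ ∃ M, ∀ z, ‖f z‖ ≤ M) (s : Set Z) :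
    BoundedLipschitzOn f s := by
  obtain ⟨⟨K, hK⟩, M, hM⟩ := h
  exact ⟨⟨K, hK.lipschitzOnWith⟩, M.toNNReal,
    fun z _ ↦ (hM z).trans (Real.le_coe_toNNReal M)⟩

theorem continuousOn (hf : BoundedLipschitzOn f s) : ContinuousOn f s :=
  hf.1.choose_spec.continuousOn

theorem comp {W : Type*} [PseudoMetricSpace W] {t : Set W} {g : W → Z} {K : ℝ≥0}
    (hf : BoundedLipschitzOn f s) (hg : LipschitzOnWith K g t) (hts : MapsTo g t s) :
    BoundedLipschitzOn (f ∘ g) t := by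
  obtain ⟨⟨Kf, hKf⟩, M, hM⟩ := hf
  exact ⟨⟨_, hKf.comp hg hts⟩, M, fun w hw ↦ hM _ (hts hw)⟩

theorem comp_fst {W : Type*} [PseudoMetricSpace W] {t : Set (Z × W)}
    (hf : BoundedLipschitzOn f s) (hts : MapsTo Prod.fst t s) :
    BoundedLipschitzOn (fun p : Z × W ↦ f p.1) t :=
  hf.comp LipschitzWith.prod_fst.lipschitzOnWith hts

theorem add (hf : BoundedLipschitzOn f s) (hg : BoundedLipschitzOn g s) :
    BoundedLipschitzOn (fun z ↦ f z + g z) s := by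
  obtain ⟨⟨Kf, hKf⟩, Mf, hMf⟩ := hf
  obtain ⟨⟨Kg, hKg⟩, Mg, hMg⟩ := hg
  exact ⟨⟨_, hKf.add hKg⟩, Mf + Mg, fun z hz ↦
    (norm_add_le _ _).trans (by push_cast; exact add_le_add (hMf z hz) (hMg z hz))⟩

theorem sub (hf : BoundedLipschitzOn f s) (hg : BoundedLipschitzOn g s) :
    BoundedLipschitzOn (fun z ↦ f z - g z) s := by
  obtain ⟨⟨Kf, hKf⟩, Mf, hMf⟩ := hf
  obtain ⟨⟨Kg, hKg⟩, Mg, hMg⟩ := hg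
  exact ⟨⟨_, hKf.sub hKg⟩, Mf + Mg, fun z hz ↦
    (norm_sub_le _ _).trans (by push_cast; exact add_le_add (hMf z hz) (hMg z hz))⟩

theorem bilinear {𝕜 : Type*} [NontriviallyNormedField 𝕜]
    [NormedSpace 𝕜 E] [NormedSpace 𝕜 F] [NormedSpace 𝕜 G] {g : Z → F} (B : E →L[𝕜] F →L[𝕜] G)
    (hf : BoundedLipschitzOn f s) (hg : BoundedLipschitzOn g s) :
    BoundedLipschitzOn (fun z ↦ B (f z) (g z)) s := by
  obtain ⟨⟨Kf, hKf⟩, Mf, hMf⟩ := hf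
  obtain ⟨⟨Kg, hKg⟩, Mg, hMg⟩ := hg
  refine ⟨⟨‖B‖₊ * (Kf * Mg + Mf * Kg), LipschitzOnWith.of_dist_le_mul fun z hz z' hz' ↦ ?_⟩,
    ‖B‖₊ * Mf * Mg, fun z hz ↦ ?_⟩
  · have hsplit : B (f z) (g z) - B (f z') (g z') =
        B (f z - f z') (g z) + B (f z') (g z - g z') := by
      simp only [map_sub, sub_apply]
      abel
    rw [dist_eq_norm, hsplit]
    have h1 := B.le_opNorm₂ (f z - f z') (g z)
    have h2 := B.le_opNorm₂ (f z') (g z - g z')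
    have hf' := hKf.dist_le_mul z hz z' hz'
    have hg' := hKg.dist_le_mul z hz z' hz'
    rw [dist_eq_norm] at hf' hg'
    calc ‖B (f z - f z') (g z) + B (f z') (g z - g z')‖
        ≤ ‖B‖ * ‖f z - f z'‖ * ‖g z‖ + ‖B‖ * ‖f z'‖ * ‖g z - g z'‖ :=
          (norm_add_le _ _).trans (add_le_add h1 h2)
      _ ≤ ‖B‖ * (Kf * dist z z') * Mg + ‖B‖ * Mf * (Kg * dist z z') := by
          gcongr
          exacts [hMg z hz, hMf z' hz']
      _ = ↑(‖B‖₊ * (Kf * Mg + Mf * Kg)) * dist z z' := by push_cast; ring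
  · calc ‖B (f z) (g z)‖ ≤ ‖B‖ * ‖f z‖ * ‖g z‖ := B.le_opNorm₂ _ _
      _ ≤ ‖B‖ * Mf * Mg := by gcongr; exacts [hMf z hz, hMg z hz]

theorem apply {𝕜 : Type*} [NontriviallyNormedField 𝕜] [NormedSpace 𝕜 E] [NormedSpace 𝕜 F]
    {A : Z → E →L[𝕜] F} (hA : BoundedLipschitzOn A s) (hf : BoundedLipschitzOn f s) :
    BoundedLipschitzOn (fun z ↦ A z (f z)) s :=
  hf.bilinear (ContinuousLinearMap.apply 𝕜 F) hA

theorem adjoint {E F : Type*} [NormedAddCommGroup E] [InnerProductSpace ℝ E] [CompleteSpace E]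
    [NormedAddCommGroup F] [InnerProductSpace ℝ F] [CompleteSpace F] {A : Z → E →L[ℝ] F}
    (hA : BoundedLipschitzOn A s) : BoundedLipschitzOn (fun z ↦ adjoint (A z)) s := by
  obtain ⟨⟨K, hK⟩, M, hM⟩ := hA
  refine ⟨⟨K, LipschitzOnWith.of_dist_le_mul fun z hz z' hz' ↦ ?_⟩, M, fun z hz ↦ ?_⟩
  · rw [dist_eq_norm, ← map_sub, LinearIsometryEquiv.norm_map, ← dist_eq_norm]
    exact hK.dist_le_mul z hz z' hz'
  · rw [LinearIsometryEquiv.norm_map]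
    exact hM z hz

end BoundedLipschitzOn

end

section Coercive

variable {E : Type*} [NormedAddCommGroup E] [InnerProductSpace ℝ E] {lam : ℝ}
  {A B : E →L[ℝ] E}

theorem mul_norm_le_norm_apply_of_coercive (hA : ∀ ξ, lam * ‖ξ‖ ^ 2 ≤ ⟪A ξ, ξ⟫_ℝ) (ξ : E) :
    lam * ‖ξ‖ ≤ ‖A ξ‖ := by
  rcases (norm_nonneg ξ).eq_or_lt with h0 | hpos
  · simp [← h0]
  · refine le_of_mul_le_mul_right ?_ hpos
    calc lam * ‖ξ‖ * ‖ξ‖ = lam * ‖ξ‖ ^ 2 := by ring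
      _ ≤ ⟪A ξ, ξ⟫_ℝ := hA ξ
      _ ≤ ‖A ξ‖ * ‖ξ‖ := real_inner_le_norm _ _

variable [FiniteDimensional ℝ E]

theorem isUnit_of_coercive (hlam : 0 < lam) (hA : ∀ ξ, lam * ‖ξ‖ ^ 2 ≤ ⟪A ξ, ξ⟫_ℝ) :
    IsUnit A := by
  have hinj : Injective A := by
    refine (injective_iff_map_eq_zero A).2 fun ξ hξ ↦ norm_eq_zero.1 ?_
    have := mul_norm_le_norm_apply_of_coercive hA ξ
    rw [hξ, norm_zero] at this
    nlinarith [norm_nonneg ξ]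
  exact ContinuousLinearMap.isUnit_iff_bijective.2
    ⟨hinj, LinearMap.injective_iff_surjective.1 hinj⟩

theorem apply_inverse_apply_of_coercive (hlam : 0 < lam)
    (hA : ∀ ξ, lam * ‖ξ‖ ^ 2 ≤ ⟪A ξ, ξ⟫_ℝ) (w : E) : A (Ring.inverse A w) = w :=
  congrArg (· w) (Ring.mul_inverse_cancel A (isUnit_of_coercive hlam hA))

theorem norm_inverse_le_of_coercive (hlam : 0 < lam)
    (hA : ∀ ξ, lam * ‖ξ‖ ^ 2 ≤ ⟪A ξ, ξ⟫_ℝ) :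
    ‖Ring.inverse A‖ ≤ lam⁻¹ := by
  refine ContinuousLinearMap.opNorm_le_bound _ (inv_nonneg.2 hlam.le) fun w ↦ ?_
  have h := mul_norm_le_norm_apply_of_coercive hA (Ring.inverse A w)
  rw [apply_inverse_apply_of_coercive hlam hA] at h
  rw [inv_mul_eq_div, le_div_iff₀ hlam, mul_comm]
  exact h

theorem norm_inverse_sub_inverse_le_of_coercive (hlam : 0 < lam)
    (hA : ∀ ξ, lam * ‖ξ‖ ^ 2 ≤ ⟪A ξ, ξ⟫_ℝ) (hB : ∀ ξ, lam * ‖ξ‖ ^ 2 ≤ ⟪B ξ, ξ⟫_ℝ) :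
    ‖Ring.inverse A - Ring.inverse B‖ ≤ lam⁻¹ ^ 2 * ‖A - B‖ := by
  have hsplit :
      Ring.inverse A - Ring.inverse B = Ring.inverse A * (B - A) * Ring.inverse B := by
    rw [mul_sub, sub_mul, Ring.mul_inverse_cancel_right _ _ (isUnit_of_coercive hlam hB),
      Ring.inverse_mul_cancel _ (isUnit_of_coercive hlam hA), one_mul]
  rw [hsplit, norm_sub_rev A]
  calc ‖Ring.inverse A * (B - A) * Ring.inverse B‖
      ≤ ‖Ring.inverse A‖ * ‖B - A‖ * ‖Ring.inverse B‖ := norm_mul₃_le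
    _ ≤ lam⁻¹ * ‖B - A‖ * lam⁻¹ := by
        gcongr
        exacts [norm_inverse_le_of_coercive hlam hA, norm_inverse_le_of_coercive hlam hB]
    _ = lam⁻¹ ^ 2 * ‖B - A‖ := by ring

theorem LipschitzOnWith.boundedLipschitzOn_inverse_of_coercive {Z : Type*} [PseudoMetricSpace Z]
    {A : Z → E →L[ℝ] E} {s : Set Z} {K : ℝ≥0} (hA : LipschitzOnWith K A s) (hlam : 0 < lam)
    (hcoer : ∀ z ∈ s, ∀ ξ, lam * ‖ξ‖ ^ 2 ≤ ⟪A z ξ, ξ⟫_ℝ) :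
    BoundedLipschitzOn (fun z ↦ Ring.inverse (A z)) s := by
  refine ⟨⟨lam⁻¹.toNNReal ^ 2 * K, LipschitzOnWith.of_dist_le_mul fun z hz z' hz' ↦ ?_⟩,
    lam⁻¹.toNNReal, fun z hz ↦ ?_⟩
  · rw [dist_eq_norm]
    refine (norm_inverse_sub_inverse_le_of_coercive hlam (hcoer z hz) (hcoer z' hz')).trans ?_
    rw [← dist_eq_norm, NNReal.coe_mul, NNReal.coe_pow, Real.coe_toNNReal _ (inv_nonneg.2 hlam.le),
      mul_assoc]
    gcongr
    exact hA.dist_le_mul z hz z' hz'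
  · rw [Real.coe_toNNReal _ (inv_nonneg.2 hlam.le)]
    exact norm_inverse_le_of_coercive hlam (hcoer z hz)

end Coercive

section MinNormControl

variable {Z E F : Type*} [NormedAddCommGroup E] [InnerProductSpace ℝ E]
  [FiniteDimensional ℝ E] [NormedAddCommGroup F] [InnerProductSpace ℝ F] [CompleteSpace F]
  {σ : Z → F →L[ℝ] E} {b : Z → E} {lam : ℝ}

/-- `σ*(σσ*)⁻¹(u - b)`, the least-norm solution `φ` of `σ φ + b = u`; at `p = ((x_t, y), x'_t)`
it is the control of the `x`-equation. -/
noncomputable def minNormControl (σ : Z → F →L[ℝ] E) (b : Z → E) (p : Z × E) : F :=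
  adjoint (σ p.1) (Ring.inverse (σ p.1 ∘L adjoint (σ p.1)) (p.2 - b p.1))

theorem apply_minNormControl_add (hlam : 0 < lam) {p : Z × E}
    (hcoer : ∀ ξ, lam * ‖ξ‖ ^ 2 ≤ ⟪σ p.1 (adjoint (σ p.1) ξ), ξ⟫_ℝ) :
    σ p.1 (minNormControl σ b p) + b p.1 = p.2 := by
  have h := apply_inverse_apply_of_coercive (A := σ p.1 ∘L adjoint (σ p.1)) hlam hcoer (p.2 - b p.1)
  rw [ContinuousLinearMap.comp_apply] at h
  rw [minNormControl, h, sub_add_cancel]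

theorem boundedLipschitzOn_minNormControl [PseudoMetricSpace Z] {s : Set (Z × E)} {t : Set Z}
    (hσ : BoundedLipschitzOn σ t) (hb : BoundedLipschitzOn b t) (hst : MapsTo Prod.fst s t)
    {M : ℝ} (hM : ∀ p ∈ s, ‖p.2‖ ≤ M) (hlam : 0 < lam)
    (hcoer : ∀ p ∈ s, ∀ ξ, lam * ‖ξ‖ ^ 2 ≤ ⟪σ p.1 (adjoint (σ p.1) ξ), ξ⟫_ℝ) :
    BoundedLipschitzOn (minNormControl σ b) s := by
  have hσs : BoundedLipschitzOn (fun p : Z × E ↦ σ p.1) s := hσ.comp_fst hst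
  have hsnd : BoundedLipschitzOn (Prod.snd : Z × E → E) s :=
    ⟨⟨1, LipschitzWith.prod_snd.lipschitzOnWith⟩, M.toNNReal,
      fun p hp ↦ (hM p hp).trans (Real.le_coe_toNNReal M)⟩
  have hA := hσs.bilinear (ContinuousLinearMap.compL ℝ E F E) hσs.adjoint
  have hAinv := hA.1.choose_spec.boundedLipschitzOn_inverse_of_coercive hlam hcoer
  exact hσs.adjoint.apply (hAinv.apply (hsnd.sub (hb.comp_fst hst)))

end MinNormControl

section ODE

variable {E : Type*} [NormedAddCommGroup E] [NormedSpace ℝ E]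

theorem contDiffOn_one_of_hasDerivWithinAt {f f' : ℝ → E} {s : Set ℝ} (hs : UniqueDiffOn ℝ s)
    (hf : ∀ t ∈ s, HasDerivWithinAt f (f' t) s t) (hf' : ContinuousOn f' s) :
    ContDiffOn ℝ 1 f s :=
  (contDiffOn_one_iff_derivWithin hs).2 ⟨fun t ht ↦ (hf t ht).differentiableWithinAt,
    hf'.congr fun t ht ↦ (hf t ht).derivWithin (hs t ht)⟩

variable [CompleteSpace E]

theorem exists_forall_mem_Icc_hasDerivWithinAt_of_lipschitzWith {T : ℝ} (hT : 0 ≤ T)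
    {v : ℝ → E → E} {K C : ℝ≥0} (hlip : ∀ t ∈ Icc 0 T, LipschitzWith K (v t))
    (hcont : ∀ y, ContinuousOn (v · y) (Icc 0 T)) (hbdd : ∀ t ∈ Icc 0 T, ∀ y, ‖v t y‖ ≤ C)
    (y₀ : E) :
    ∃ y : ℝ → E, y 0 = y₀ ∧ ∀ t ∈ Icc 0 T, HasDerivWithinAt y (v t (y t)) (Icc 0 T) t :=
  IsPicardLindelof.exists_eq_forall_mem_Icc_hasDerivWithinAt₀
    (t₀ := ⟨0, left_mem_Icc.2 hT⟩) (a := C * T.toNNReal) (L := C) (K := K)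
    { lipschitzOnWith := fun t ht ↦ (hlip t ht).lipschitzOnWith
      continuousOn := fun y _ ↦ hcont y
      norm_le := fun t ht y _ ↦ hbdd t ht y
      mul_max_le := by simp [hT] }

theorem exists_contDiffOn_Icc_derivWithin_eq_comp {P : Type*} [PseudoMetricSpace P] {T : ℝ}
    (hT : 0 < T) {G : P → E} {S : Set P} (hG : BoundedLipschitzOn G S) {c : ℝ → E → P}
    {K : ℝ≥0} (hc_lip : ∀ t ∈ Icc 0 T, LipschitzWith K (c t))
    (hc_cont : ∀ y : ℝ → E, ContinuousOn y (Icc 0 T) → ContinuousOn (fun t ↦ c t (y t)) (Icc 0 T))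
    (hc_mem : ∀ t ∈ Icc 0 T, ∀ y, c t y ∈ S) (y₀ : E) :
    ∃ y : ℝ → E, ContDiffOn ℝ 1 y (Icc 0 T) ∧ y 0 = y₀ ∧
      ∀ t ∈ Icc 0 T, derivWithin y (Icc 0 T) t = G (c t (y t)) := by
  have hGc : ∀ y : ℝ → E, ContinuousOn y (Icc 0 T) →
      ContinuousOn (fun t ↦ G (c t (y t))) (Icc 0 T) := fun y hy ↦
    hG.continuousOn.comp (hc_cont y hy) fun t ht ↦ hc_mem t ht _
  obtain ⟨⟨L, hL⟩, M, hM⟩ := hG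
  obtain ⟨y, hy0, hy⟩ := exists_forall_mem_Icc_hasDerivWithinAt_of_lipschitzWith hT.le
    (v := fun t y ↦ G (c t y)) (K := L * K) (C := M)
    (fun t ht ↦ lipschitzOnWith_univ.1 <|
      hL.comp (hc_lip t ht).lipschitzOnWith fun y _ ↦ hc_mem t ht y)
    (fun y ↦ hGc _ continuousOn_const) (fun t ht y ↦ hM _ (hc_mem t ht y)) y₀
  have hs := uniqueDiffOn_Icc hT
  exact ⟨y, contDiffOn_one_of_hasDerivWithinAt hs hy
    (hGc y fun t ht ↦ (hy t ht).continuousWithinAt), hy0,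
    fun t ht ↦ (hy t ht).derivWithin (hs t ht)⟩

end ODE

theorem stmt_13_general (T : ℝ) (hT : 0 < T) (d n m : ℕ)
    (σ : EuclideanSpace ℝ (Fin d) × EuclideanSpace ℝ (Fin n) →
      (EuclideanSpace ℝ (Fin m) →L[ℝ] EuclideanSpace ℝ (Fin d)))
    (bbar : EuclideanSpace ℝ (Fin d) × EuclideanSpace ℝ (Fin n) → EuclideanSpace ℝ (Fin d))
    (α : EuclideanSpace ℝ (Fin d) × EuclideanSpace ℝ (Fin n) →
      (EuclideanSpace ℝ (Fin m) →L[ℝ] EuclideanSpace ℝ (Fin n)))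
    (bbeta : EuclideanSpace ℝ (Fin d) × EuclideanSpace ℝ (Fin n) → EuclideanSpace ℝ (Fin n))
    (hσ : (∃ L : NNReal, LipschitzWith L σ) ∧ (∃ M, ∀ z, ‖σ z‖ ≤ M))
    (hbbar : (∃ L : NNReal, LipschitzWith L bbar) ∧ (∃ M, ∀ z, ‖bbar z‖ ≤ M))
    (hα : (∃ L : NNReal, LipschitzWith L α) ∧ (∃ M, ∀ z, ‖α z‖ ≤ M))
    (hbbeta : (∃ L : NNReal, LipschitzWith L bbeta) ∧ (∃ M, ∀ z, ‖bbeta z‖ ≤ M))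
    (x : ℝ → EuclideanSpace ℝ (Fin d)) (hx : ContDiffOn ℝ 1 x (Set.Icc 0 T))
    (y₀ : EuclideanSpace ℝ (Fin n)) (lam : ℝ) (hlam : 0 < lam)
    (hell : ∀ t ∈ Set.Icc (0 : ℝ) T, ∀ (y : EuclideanSpace ℝ (Fin n))
      (ξ : EuclideanSpace ℝ (Fin d)),
      lam * ‖ξ‖ ^ 2
        ≤ (inner ℝ (σ (x t, y) ((ContinuousLinearMap.adjoint (σ (x t, y))) ξ)) ξ : ℝ)) :
    ∃ (y : ℝ → EuclideanSpace ℝ (Fin n)) (φ : ℝ → EuclideanSpace ℝ (Fin m)),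
      ContDiffOn ℝ 1 y (Set.Icc 0 T) ∧ y 0 = y₀ ∧ ContinuousOn φ (Set.Icc 0 T) ∧
      ∀ t ∈ Set.Icc (0 : ℝ) T,
        derivWithin x (Set.Icc 0 T) t = σ (x t, y t) (φ t) + bbar (x t, y t) ∧
        derivWithin y (Set.Icc 0 T) t = α (x t, y t) (φ t) + bbeta (x t, y t) := by
  have hs := uniqueDiffOn_Icc hT
  have hx' := hx.continuousOn_derivWithin hs le_rfl
  obtain ⟨U, hU⟩ := isCompact_Icc.exists_bound_of_continuousOn hx'
  set S : Set ((_ × EuclideanSpace ℝ (Fin n)) × EuclideanSpace ℝ (Fin d)) :=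
    {p | (∃ t ∈ Icc 0 T, p.1.1 = x t) ∧ ‖p.2‖ ≤ U}
  have hcoer : ∀ p ∈ S, ∀ ξ, lam * ‖ξ‖ ^ 2 ≤ ⟪σ p.1 (adjoint (σ p.1) ξ), ξ⟫_ℝ := by
    rintro ⟨⟨_, y⟩, _⟩ ⟨⟨t, ht, rfl⟩, -⟩
    exact hell t ht y
  have hΦ := boundedLipschitzOn_minNormControl (.of_lipschitzWith hσ univ)
    (.of_lipschitzWith hbbar univ) (mapsTo_univ _ _) (fun p hp ↦ hp.2) hlam hcoer
  have hG := ((BoundedLipschitzOn.of_lipschitzWith hα univ).comp_fst (mapsTo_univ _ S)).apply hΦ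
    |>.add ((BoundedLipschitzOn.of_lipschitzWith hbbeta univ).comp_fst (mapsTo_univ _ S))
  set c : ℝ → EuclideanSpace ℝ (Fin n) → _ := fun t y ↦ ((x t, y), derivWithin x (Icc 0 T) t)
  have hc_cont : ∀ y : ℝ → EuclideanSpace ℝ (Fin n), ContinuousOn y (Icc 0 T) →
      ContinuousOn (fun t ↦ c t (y t)) (Icc 0 T) := fun y hy ↦
    (hx.continuousOn.prodMk hy).prodMk hx'
  have hc_mem : ∀ t ∈ Icc 0 T, ∀ y, c t y ∈ S := fun t ht _ ↦ ⟨⟨t, ht, rfl⟩, hU t ht⟩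
  obtain ⟨y, hy, hy0, hy'⟩ := exists_contDiffOn_Icc_derivWithin_eq_comp hT hG (K := 1)
    (fun t _ ↦ LipschitzWith.of_dist_le_mul fun y y' ↦ by simp [c, Prod.dist_eq]) hc_cont hc_mem y₀
  refine ⟨y, fun t ↦ minNormControl σ bbar (c t (y t)), hy, hy0,
    hΦ.continuousOn.comp (hc_cont y hy.continuousOn) fun t ht ↦ hc_mem t ht _,
    fun t ht ↦ ⟨(apply_minNormControl_add hlam (hcoer _ (hc_mem t ht _))).symm, hy' t ht⟩⟩

/-- Let `σ, b̄, α, β̄` be bounded Lipschitz coefficients on `ℝ^d × ℝ^n`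
(matrix-valued for `σ, α`), let `x ∈ C¹([0,T]; ℝ^d)`, `y₀ ∈ ℝ^n`, and assume the uniform
ellipticity `⟨σσ*(x_t, y)ξ, ξ⟩ ≥ λ_* |ξ|²` for all `t ∈ [0,T]`, `y`, `ξ`. Then there exist
`y ∈ C¹([0,T]; ℝ^n)` with `y(0) = y₀` and a continuous control `φ : [0,T] → ℝ^m` such that
`x' = σ(x, y)φ + b̄(x, y)` and `y' = α(x, y)φ + β̄(x, y)` on `[0,T]`. -/
theorem stmt_13 (T : ℝ) (hT : 0 < T) (d n m : ℕ) (hd : 1 ≤ d) (hn : 1 ≤ n) (hm : 1 ≤ m)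
    (σ : EuclideanSpace ℝ (Fin d) × EuclideanSpace ℝ (Fin n) →
      (EuclideanSpace ℝ (Fin m) →L[ℝ] EuclideanSpace ℝ (Fin d)))
    (bbar : EuclideanSpace ℝ (Fin d) × EuclideanSpace ℝ (Fin n) → EuclideanSpace ℝ (Fin d))
    (α : EuclideanSpace ℝ (Fin d) × EuclideanSpace ℝ (Fin n) →
      (EuclideanSpace ℝ (Fin m) →L[ℝ] EuclideanSpace ℝ (Fin n)))
    (bbeta : EuclideanSpace ℝ (Fin d) × EuclideanSpace ℝ (Fin n) → EuclideanSpace ℝ (Fin n))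
    (hσ : (∃ L : NNReal, LipschitzWith L σ) ∧ (∃ M, ∀ z, ‖σ z‖ ≤ M))
    (hbbar : (∃ L : NNReal, LipschitzWith L bbar) ∧ (∃ M, ∀ z, ‖bbar z‖ ≤ M))
    (hα : (∃ L : NNReal, LipschitzWith L α) ∧ (∃ M, ∀ z, ‖α z‖ ≤ M))
    (hbbeta : (∃ L : NNReal, LipschitzWith L bbeta) ∧ (∃ M, ∀ z, ‖bbeta z‖ ≤ M))
    (x : ℝ → EuclideanSpace ℝ (Fin d)) (hx : ContDiffOn ℝ 1 x (Set.Icc 0 T))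
    (y₀ : EuclideanSpace ℝ (Fin n)) (lam : ℝ) (hlam : 0 < lam)
    (hell : ∀ t ∈ Set.Icc (0 : ℝ) T, ∀ (y : EuclideanSpace ℝ (Fin n))
      (ξ : EuclideanSpace ℝ (Fin d)),
      lam * ‖ξ‖ ^ 2
        ≤ (inner ℝ (σ (x t, y) ((ContinuousLinearMap.adjoint (σ (x t, y))) ξ)) ξ : ℝ)) :
    ∃ (y : ℝ → EuclideanSpace ℝ (Fin n)) (φ : ℝ → EuclideanSpace ℝ (Fin m)),
      ContDiffOn ℝ 1 y (Set.Icc 0 T) ∧ y 0 = y₀ ∧ ContinuousOn φ (Set.Icc 0 T) ∧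
      ∀ t ∈ Set.Icc (0 : ℝ) T,
        derivWithin x (Set.Icc 0 T) t = σ (x t, y t) (φ t) + bbar (x t, y t) ∧
        derivWithin y (Set.Icc 0 T) t = α (x t, y t) (φ t) + bbeta (x t, y t) :=
  stmt_13_general T hT d n m σ bbar α bbeta hσ hbbar hα hbbeta x hx y₀ lam hlam hell
end
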